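/- Let p > 1 and let 0 < ε < p − 1 satisfy additionally 0 < p − ε − 1 < 1. Set ζ(ε) = p^p·ε/(p−ε−1). Then for all real numbers a, b > 0 one has |b − a|^{p−2}(b − a)(a^{−ε} − b^{−ε}) ≥ ζ(ε)·|b^{(p−ε−1)/p} − a^{(p−ε−1)/p}|^p. -/

import Mathlib

/-!
For `a < b` write `σ = p - ε - 1` and `γ = σ / p`.
Then `b^γ - a^γ = γ ∫_a^b t^{(-ε-1)/p} dt`, and Jensen's inequality for `x ↦ x^p` bounds
the `p`-th power of this integral by
`(b - a)^{p-1} ∫_a^b t^{-ε-1} dt = (b - a)^{p-1} (a^{-ε} - b^{-ε}) / ε`.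
The constant comes out as `ζ(ε) γ^p = ε σ^{p-1}`, which is at most `ε` because `σ < 1`.
-/

open MeasureTheory Real Set intervalIntegral

theorem rpow_integral_le_mul_integral_rpow {f : ℝ → ℝ} {a b p : ℝ} (hab : a < b)
    (hp : 1 ≤ p) (hf : ContinuousOn f (Icc a b)) (hf0 : ∀ x ∈ Icc a b, 0 ≤ f x) :
    (∫ x in a..b, f x) ^ p ≤ (b - a) ^ (p - 1) * ∫ x in a..b, f x ^ p := by
  have hba : 0 < b - a := sub_pos.mpr hab
  have hfp : ContinuousOn (fun x => f x ^ p) (Icc a b) :=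
    hf.rpow_const fun x _ => Or.inr (by linarith)
  have jensen := (convexOn_rpow hp).map_set_average_le (μ := volume)
    (continuousOn_id.rpow_const fun _ _ => Or.inr (by linarith)) isClosed_Ici
    (by simp [hab]) (by simp)
    ((ae_restrict_iff' measurableSet_Ioc).mpr (Filter.Eventually.of_forall
      fun x hx => hf0 x (Ioc_subset_Icc_self hx)))
    (hf.integrableOn_Icc.mono_set Ioc_subset_Icc_self)
    (hfp.integrableOn_Icc.mono_set Ioc_subset_Icc_self)
  simp only [setAverage_eq, Real.volume_real_Ioc_of_le hab.le, ← integral_of_le hab.le,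
    smul_eq_mul] at jensen
  have hI : 0 ≤ ∫ x in a..b, f x :=
    integral_nonneg hab.le hf0
  rw [mul_rpow (by positivity) hI, inv_rpow hba.le] at jensen
  calc (∫ x in a..b, f x) ^ p
        = (b - a) ^ p * (((b - a) ^ p)⁻¹ * (∫ x in a..b, f x) ^ p) := by field_simp
    _ ≤ (b - a) ^ p * ((b - a)⁻¹ * ∫ x in a..b, f x ^ p) := by gcongr
    _ = (b - a) ^ (p - 1) * ∫ x in a..b, f x ^ p := by
        rw [rpow_sub_one hba.ne']; ring

theorem rpow_sub_rpow_rpow_le {a b p ε : ℝ} (ha : 0 < a) (hab : a < b) (hε : 0 < ε)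
    (hσ : 0 < p - ε - 1) :
    (b ^ ((p - ε - 1) / p) - a ^ ((p - ε - 1) / p)) ^ p ≤
      ((p - ε - 1) / p) ^ p * (b - a) ^ (p - 1) * ((a ^ (-ε) - b ^ (-ε)) / ε) := by
  have hp : 0 < p := by linarith
  have h0 : (0 : ℝ) ∉ uIcc a b := notMem_uIcc_of_lt ha (ha.trans hab)
  have hdiff : b ^ ((p - ε - 1) / p) - a ^ ((p - ε - 1) / p) =
      (p - ε - 1) / p * ∫ t in a..b, t ^ ((-ε - 1) / p) := by
    rw [integral_rpow (Or.inr ⟨?_, h0⟩)]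
    · rw [show (-ε - 1) / p + 1 = (p - ε - 1) / p by field_simp; ring]
      field_simp
    · rw [ne_eq, div_eq_iff hp.ne']; intro h; linarith
  have hpow_integral : ∫ t in a..b, (t ^ ((-ε - 1) / p)) ^ p = (a ^ (-ε) - b ^ (-ε)) / ε := by
    rw [integral_congr (g := fun t => t ^ (-ε - 1)) fun t ht => ?_,
      integral_rpow (Or.inr ⟨by intro h; linarith, h0⟩), sub_add_cancel]
    · rw [div_neg, ← neg_div, neg_sub]
    · rw [← rpow_mul (ha.le.trans (by simpa [hab.le] using ht.1)), div_mul_cancel₀ _ hp.ne']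
  have jensen := rpow_integral_le_mul_integral_rpow (f := fun t => t ^ ((-ε - 1) / p)) (p := p) hab
    (by linarith) (continuousOn_id.rpow_const fun t ht => Or.inl (ha.trans_le ht.1).ne')
    fun t ht => rpow_nonneg (ha.le.trans ht.1) _
  rw [hpow_integral] at jensen
  have hI : 0 ≤ ∫ t in a..b, t ^ ((-ε - 1) / p) :=
    integral_nonneg hab.le fun t ht => rpow_nonneg (ha.le.trans ht.1) _
  rw [hdiff, mul_rpow (div_pos hσ hp).le hI, mul_assoc]
  gcongr

theorem two_point_inequality_of_lt {a b p ε : ℝ} (ha : 0 < a) (hab : a < b) (hε : 0 < ε)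
    (hσ : 0 < p - ε - 1) (hσ1 : p - ε - 1 < 1) :
    |b - a| ^ (p - 2) * (b - a) * (a ^ (-ε) - b ^ (-ε)) ≥
      (p ^ p * ε / (p - ε - 1)) * |b ^ ((p - ε - 1) / p) - a ^ ((p - ε - 1) / p)| ^ p := by
  have hp : 0 < p := by linarith
  have hba : 0 < b - a := sub_pos.mpr hab
  have hγ : 0 < (p - ε - 1) / p := div_pos hσ hp
  have hA : 0 ≤ a ^ (-ε) - b ^ (-ε) :=
    sub_nonneg.mpr (rpow_le_rpow_of_nonpos ha hab.le (neg_nonpos.mpr hε.le))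
  have hζ : p ^ p * ε / (p - ε - 1) * ((p - ε - 1) / p) ^ p = ε * (p - ε - 1) ^ (p - 1) := by
    rw [div_rpow hσ.le hp.le, rpow_sub_one hσ.ne']
    field_simp
  have hσp : (p - ε - 1) ^ (p - 1) ≤ 1 := rpow_le_one hσ.le hσ1.le (by linarith)
  rw [abs_of_pos hba, abs_of_pos (sub_pos.mpr (rpow_lt_rpow ha.le hab hγ)),
    ← rpow_add_one hba.ne', show p - 2 + 1 = p - 1 by ring]
  calc p ^ p * ε / (p - ε - 1) * (b ^ ((p - ε - 1) / p) - a ^ ((p - ε - 1) / p)) ^ p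
      ≤ p ^ p * ε / (p - ε - 1) *
          (((p - ε - 1) / p) ^ p * (b - a) ^ (p - 1) * ((a ^ (-ε) - b ^ (-ε)) / ε)) := by
        gcongr
        exact rpow_sub_rpow_rpow_le ha hab hε hσ
    _ = (p - ε - 1) ^ (p - 1) * ((b - a) ^ (p - 1) * (a ^ (-ε) - b ^ (-ε))) := by
        rw [← mul_assoc, ← mul_assoc, hζ]
        field_simp
    _ ≤ (b - a) ^ (p - 1) * (a ^ (-ε) - b ^ (-ε)) :=
        mul_le_of_le_one_left (by positivity) hσp

theorem two_point_log_inequality_small_exponent_general (p ε : ℝ)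
    (hε0 : 0 < ε) (h0 : 0 < p - ε - 1) (h1 : p - ε - 1 < 1) :
    ∀ a b : ℝ, 0 < a → 0 < b →
      |b - a| ^ (p - 2) * (b - a) * (a ^ (-ε) - b ^ (-ε)) ≥
        (p ^ p * ε / (p - ε - 1)) *
          |b ^ ((p - ε - 1) / p) - a ^ ((p - ε - 1) / p)| ^ p := by
  intro a b ha hb
  rcases lt_trichotomy a b with hab | rfl | hab
  · exact two_point_inequality_of_lt ha hab hε0 h0 h1
  · simp [zero_rpow (by linarith : p ≠ 0)]
  · have swapped := two_point_inequality_of_lt hb hab hε0 h0 h1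
    rw [abs_sub_comm a b, abs_sub_comm (a ^ _)] at swapped
    linarith

/-- Lemma 6.2, case `0 < p - ε - 1 < 1`: with `ζ(ε) = p^p ε/(p-ε-1)`, for all `a, b > 0`,
`|b-a|^{p-2}(b-a)(a^{-ε} - b^{-ε}) ≥ ζ(ε) |b^{(p-ε-1)/p} - a^{(p-ε-1)/p}|^p`. -/
theorem two_point_log_inequality_small_exponent (p ε : ℝ) (hp : 1 < p)
    (hε0 : 0 < ε) (hε1 : ε < p - 1) (h0 : 0 < p - ε - 1) (h1 : p - ε - 1 < 1) :
    ∀ a b : ℝ, 0 < a → 0 < b →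
      |b - a| ^ (p - 2) * (b - a) * (a ^ (-ε) - b ^ (-ε)) ≥
        (p ^ p * ε / (p - ε - 1)) *
          |b ^ ((p - ε - 1) / p) - a ^ ((p - ε - 1) / p)| ^ p :=
  two_point_log_inequality_small_exponent_general p ε hε0 h0 h1
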